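/- Let (E, F) be a resistance form on a set X whose resistance metric R is complete and such that (X,R) is doubling. Then for every u ∈ F, the truncations û_n := max(min(u, n), −n) belong to F for every n ∈ ℕ, and lim_{n→∞} E(u − û_n, u − û_n) = 0. -/

import Mathlib

open Filter Set Metric
open scoped ENNReal Topology

/-- A resistance form `(E, F)` on a set `X` (Kigami):
`F` is a linear subspace of the real-valued functions on `X`, `E` is a nonnegative
symmetric bilinear form on `F` such that (RF1) constants belong to `F` and
`E(u,u) = 0` iff `u` is constant, (RF2) the quotient of `F` by the constants is a
Hilbert space under `E` (stated as completeness of the `E`-seminorm on `F`),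
(RF3) points of `X` are separated by `F`, (RF4) for `x ≠ y` the quantity
`R(x,y) = (inf {E(u,u) : u ∈ F, u x = 1, u y = 0})⁻¹` is finite (i.e. the infimum
is positive; an admissible `u` always exists), and (RF5) the Markov property holds
for the unit truncation. -/
structure ResistanceForm (X : Type*) where
  F : Set (X → ℝ)
  E : (X → ℝ) → (X → ℝ) → ℝ
  zero_mem : (0 : X → ℝ) ∈ F
  add_mem : ∀ {u v : X → ℝ}, u ∈ F → v ∈ F → u + v ∈ F
  smul_mem : ∀ (c : ℝ) {u : X → ℝ}, u ∈ F → c • u ∈ F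
  const_mem : ∀ c : ℝ, (fun _ => c) ∈ F
  symm : ∀ u ∈ F, ∀ v ∈ F, E u v = E v u
  add_left : ∀ u ∈ F, ∀ v ∈ F, ∀ w ∈ F, E (u + v) w = E u w + E v w
  smul_left : ∀ (c : ℝ), ∀ u ∈ F, ∀ v ∈ F, E (c • u) v = c * E u v
  nonneg : ∀ u ∈ F, 0 ≤ E u u
  null_iff_const : ∀ u ∈ F, (E u u = 0 ↔ ∃ c : ℝ, ∀ x, u x = c)
  complete : ∀ u : ℕ → (X → ℝ), (∀ n, u n ∈ F) →
    (∀ ε : ℝ, 0 < ε → ∃ N : ℕ, ∀ m ≥ N, ∀ n ≥ N, E (u m - u n) (u m - u n) < ε) →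
    ∃ v ∈ F, ∀ ε : ℝ, 0 < ε → ∃ N : ℕ, ∀ n ≥ N, E (v - u n) (v - u n) < ε
  sep : ∀ x y : X, x ≠ y → ∃ u ∈ F, u x ≠ u y
  exists_unit : ∀ x y : X, x ≠ y → ∃ u ∈ F, u x = 1 ∧ u y = 0
  inf_pos : ∀ x y : X, x ≠ y →
    0 < sInf {e : ℝ | ∃ u ∈ F, u x = 1 ∧ u y = 0 ∧ E u u = e}
  markov : ∀ u ∈ F, (fun x => max 0 (min 1 (u x))) ∈ F ∧
    E (fun x => max 0 (min 1 (u x))) (fun x => max 0 (min 1 (u x))) ≤ E u u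

namespace ResistanceForm

variable {X : Type*}

open Classical in
/-- The resistance metric `R` associated with a resistance form:
`R(x,x) = 0` and `R(x,y) = (inf {E(u,u) : u ∈ F, u x = 1, u y = 0})⁻¹` for `x ≠ y`. -/
noncomputable def rmetric (rf : ResistanceForm X) (x y : X) : ℝ :=
  if x = y then 0
  else (sInf {e : ℝ | ∃ u ∈ rf.F, u x = 1 ∧ u y = 0 ∧ rf.E u u = e})⁻¹

open Classical in
/-- The resistance `𝓡(A,B)` between two sets: the reciprocal of the minimal energy of
functions that are `≡ 1` on `A` and `≡ 0` on `B` if such functions exist, `0` if no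
such function exists, and `∞` if `A` or `B` is empty. -/
noncomputable def setRes (rf : ResistanceForm X) (A B : Set X) : ℝ≥0∞ :=
  if A.Nonempty ∧ B.Nonempty then
    (if ∃ u ∈ rf.F, (∀ x ∈ A, u x = 1) ∧ (∀ x ∈ B, u x = 0) then
      (ENNReal.ofReal
        (sInf {e : ℝ | ∃ u ∈ rf.F, (∀ x ∈ A, u x = 1) ∧ (∀ x ∈ B, u x = 0) ∧ rf.E u u = e}))⁻¹
    else 0)
  else ⊤

end ResistanceForm

/-- A distance function `ρ` on `X` is doubling: there is `N ∈ ℕ` such that every ball of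
radius `2r` is covered by `N` balls of radius `r`. -/
def DoublingOf {X : Type*} (ρ : X → X → ℝ) : Prop :=
  ∃ N : ℕ, ∀ (x : X) (r : ℝ), ∃ s : Finset X, s.card ≤ N ∧
    {y : X | ρ x y < 2 * r} ⊆ ⋃ z ∈ s, {y : X | ρ z y < r}

/-- A distance function `ρ` on `X` is uniformly perfect: there is `γ > 1` such that
`B(x, γ r) \ B(x, r) ≠ ∅` whenever `B(x,r)` is not the whole space. -/
def UniformlyPerfectOf {X : Type*} (ρ : X → X → ℝ) : Prop :=
  ∃ γ : ℝ, 1 < γ ∧ ∀ (x : X) (r : ℝ), 0 < r → {y : X | ρ x y < r} ≠ Set.univ →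
    ({y : X | ρ x y < γ * r} \ {y : X | ρ x y < r}).Nonempty

/-!
Write `Tₙ` for truncation at level `n`. Up to an affine change of scale, `Tₙ` is the unit
truncation, so the Markov property gives `Tₙ w ∈ F` and `E(Tₙ w) ≤ E(w)`. Moreover `Tₙ` maps
every point of the segment from `Tₙ w` to `w` back to `Tₙ w`, so `Tₙ w` minimises the energy
on that segment and `E(Tₙ w, w - Tₙ w) ≥ 0`, i.e. `E(Tₙ w) + E(w - Tₙ w) ≤ E(w)`. Applied to
`w = Tₘ u` with `n ≤ m` (where `Tₙ Tₘ = Tₙ`), this makes `E(Tₙ u)` increasing, bounded by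
`E(u)`, and `(Tₙ u)` Cauchy for the energy. By completeness it has an energy limit `v`; since
`(w x - w y)² ≤ R(x, y) E(w)` and `Tₙ u → u` pointwise, `v - u` is constant, so
`E(u - Tₙ u) = E(v - Tₙ u) → 0`.
-/

def truncate (n a : ℝ) : ℝ := max (min a n) (-n)

lemma truncate_zero (a : ℝ) : truncate 0 a = 0 := by
  simp [truncate]

lemma truncate_eq_affine_unit (a : ℝ) {n : ℝ} (hn : 0 < n) :
    truncate n a = 2 * n * max 0 (min 1 ((a + n) / (2 * n))) - n := by
  obtain ⟨s, rfl⟩ : ∃ s, a = 2 * n * s - n := ⟨(a + n) / (2 * n), by field_simp; ring⟩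
  rw [show (2 * n * s - n + n) / (2 * n) = s by field_simp; ring]
  simp only [truncate, max_def, min_def]
  split_ifs <;> nlinarith

lemma truncate_comp_truncate_of_le {n m : ℝ} (h : n ≤ m) :
    truncate n ∘ truncate m = truncate n := by
  funext a
  simp only [Function.comp_apply, truncate, max_def, min_def]
  split_ifs <;> linarith

lemma truncate_add_mul_sub_truncate (a : ℝ) {n t : ℝ} (hn : 0 ≤ n) (ht0 : 0 ≤ t) (ht1 : t ≤ 1) :
    truncate n (truncate n a + t * (a - truncate n a)) = truncate n a := by
  simp only [truncate, max_def, min_def]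
  split_ifs <;> nlinarith

lemma truncate_of_abs_le {a n : ℝ} (h : |a| ≤ n) : truncate n a = a := by
  rw [abs_le] at h
  simp only [truncate, max_def, min_def]
  split_ifs <;> linarith

lemma eq_zero_of_forall_nonneg_add_mul {a b : ℝ} (h : ∀ t, 0 ≤ a + t * b) : b = 0 := by
  by_contra hb
  have := h (-(a + 1) / b)
  rw [div_mul_cancel₀ _ hb] at this
  linarith

lemma nonneg_of_forall_nonneg_add_mul {b c : ℝ} (h : ∀ t, 0 < t → t ≤ 1 → 0 ≤ b + t * c) :
    0 ≤ b := by
  have hcont : Continuous fun t : ℝ => b + t * c := by fun_prop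
  refine ge_of_tendsto ((hcont.tendsto' 0 b (by simp)).mono_left
    (nhdsWithin_le_nhds (s := Ioi 0))) ?_
  filter_upwards [Ioc_mem_nhdsGT one_pos] with t ht using h t ht.1 ht.2

namespace ResistanceForm

variable {X : Type*} (rf : ResistanceForm X)

lemma neg_mem {u : X → ℝ} (hu : u ∈ rf.F) : -u ∈ rf.F := by
  simpa using rf.smul_mem (-1) hu

lemma sub_mem {u v : X → ℝ} (hu : u ∈ rf.F) (hv : v ∈ rf.F) : u - v ∈ rf.F := by
  simpa [sub_eq_add_neg] using rf.add_mem hu (rf.neg_mem hv)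

lemma E_add_right {u v w : X → ℝ} (hu : u ∈ rf.F) (hv : v ∈ rf.F) (hw : w ∈ rf.F) :
    rf.E u (v + w) = rf.E u v + rf.E u w := by
  rw [rf.symm u hu _ (rf.add_mem hv hw), rf.add_left v hv w hw u hu,
    rf.symm v hv u hu, rf.symm w hw u hu]

lemma E_smul_right (c : ℝ) {u v : X → ℝ} (hu : u ∈ rf.F) (hv : v ∈ rf.F) :
    rf.E u (c • v) = c * rf.E u v := by
  rw [rf.symm u hu _ (rf.smul_mem c hv), rf.smul_left c v hv u hu, rf.symm v hv u hu]

lemma E_smul_smul (c : ℝ) {u : X → ℝ} (hu : u ∈ rf.F) :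
    rf.E (c • u) (c • u) = c ^ 2 * rf.E u u := by
  rw [rf.smul_left c u hu _ (rf.smul_mem c hu), rf.E_smul_right c hu hu]
  ring

lemma E_add_add {u v : X → ℝ} (hu : u ∈ rf.F) (hv : v ∈ rf.F) :
    rf.E (u + v) (u + v) = rf.E u u + 2 * rf.E u v + rf.E v v := by
  rw [rf.add_left u hu v hv _ (rf.add_mem hu hv), rf.E_add_right hu hu hv,
    rf.E_add_right hv hu hv, rf.symm v hv u hu]
  ring

lemma E_sub_comm {u v : X → ℝ} (hu : u ∈ rf.F) (hv : v ∈ rf.F) :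
    rf.E (u - v) (u - v) = rf.E (v - u) (v - u) := by
  rw [← neg_sub v u, ← neg_one_smul ℝ (v - u), rf.E_smul_smul _ (rf.sub_mem hv hu)]
  ring

lemma E_const_const (c : ℝ) : rf.E (fun _ : X => c) (fun _ => c) = 0 :=
  (rf.null_iff_const _ (rf.const_mem c)).2 ⟨c, fun _ => rfl⟩

lemma E_const_right {w : X → ℝ} (hw : w ∈ rf.F) (c : ℝ) : rf.E w (fun _ => c) = 0 := by
  have hc := rf.const_mem (X := X) c
  suffices 2 * rf.E w (fun _ => c) = 0 by linarith
  refine eq_zero_of_forall_nonneg_add_mul (a := rf.E w w) fun t => ?_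
  have h := rf.nonneg _ (rf.add_mem hw (rf.smul_mem t hc))
  rwa [rf.E_add_add hw (rf.smul_mem t hc), rf.E_smul_right t hw hc, rf.E_smul_smul t hc,
    rf.E_const_const, mul_zero, add_zero, mul_left_comm] at h

lemma E_add_const {w : X → ℝ} (hw : w ∈ rf.F) (c : ℝ) :
    rf.E (w + fun _ => c) (w + fun _ => c) = rf.E w w := by
  rw [rf.E_add_add hw (rf.const_mem c), rf.E_const_right hw c, rf.E_const_const]
  ring

lemma E_nonneg_of_forall_le_E_add_smul {g d : X → ℝ} (hg : g ∈ rf.F) (hd : d ∈ rf.F)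
    (h : ∀ t : ℝ, 0 < t → t ≤ 1 → rf.E g g ≤ rf.E (g + t • d) (g + t • d)) :
    0 ≤ rf.E g d := by
  suffices 0 ≤ 2 * rf.E g d by linarith
  refine nonneg_of_forall_nonneg_add_mul (c := rf.E d d) fun t ht0 ht1 => ?_
  have h := h t ht0 ht1
  rw [rf.E_add_add hg (rf.smul_mem t hd), rf.E_smul_right t hg hd, rf.E_smul_smul t hd] at h
  nlinarith

lemma sq_sub_le_rmetric_mul_E {w : X → ℝ} (hw : w ∈ rf.F) (x y : X) :
    (w x - w y) ^ 2 ≤ rf.rmetric x y * rf.E w w := by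
  by_cases hxy : x = y
  · subst hxy
    simp [rmetric]
  set s := sInf {e : ℝ | ∃ p ∈ rf.F, p x = 1 ∧ p y = 0 ∧ rf.E p p = e}
  have hs : 0 < s := rf.inf_pos x y hxy
  rw [rmetric, if_neg hxy, inv_mul_eq_div, le_div_iff₀ hs]
  by_cases hD : w x - w y = 0
  · rw [hD]
    simpa using rf.nonneg w hw
  set p : X → ℝ := (w x - w y)⁻¹ • (w + fun _ => -w y)
  have hp : p ∈ rf.F := rf.smul_mem _ (rf.add_mem hw (rf.const_mem _))
  have hpx : p x = 1 := by
    simp only [p, Pi.smul_apply, Pi.add_apply, smul_eq_mul, ← sub_eq_add_neg]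
    exact inv_mul_cancel₀ hD
  have hpy : p y = 0 := by simp [p]
  have hEp : rf.E p p = (w x - w y)⁻¹ ^ 2 * rf.E w w := by
    rw [rf.E_smul_smul _ (rf.add_mem hw (rf.const_mem _)), rf.E_add_const hw]
  have hsp : s ≤ rf.E p p :=
    csInf_le ⟨0, by rintro e ⟨q, hq, -, -, rfl⟩; exact rf.nonneg q hq⟩ ⟨p, hp, hpx, hpy, rfl⟩
  calc (w x - w y) ^ 2 * s ≤ (w x - w y) ^ 2 * rf.E p p := by gcongr
    _ = rf.E w w := by rw [hEp]; field_simp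

lemma truncate_comp_eq_affine_unit (w : X → ℝ) {n : ℝ} (hn : 0 < n) :
    truncate n ∘ w =
      (2 * n) • (fun x => max 0 (min 1 (((2 * n)⁻¹ • (w + fun _ => n) : X → ℝ) x))) +
        fun _ => -n := by
  funext x
  simp only [Function.comp_apply, truncate_eq_affine_unit (w x) hn, Pi.add_apply,
    Pi.smul_apply, smul_eq_mul]
  ring_nf

lemma truncate_comp_mem {w : X → ℝ} (hw : w ∈ rf.F) {n : ℝ} (hn : 0 ≤ n) :
    truncate n ∘ w ∈ rf.F := by
  rcases hn.eq_or_lt with rfl | hn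
  · simpa [Function.comp_def, truncate_zero] using rf.const_mem 0
  rw [truncate_comp_eq_affine_unit w hn]
  exact rf.add_mem (rf.smul_mem _ (rf.markov _ (rf.smul_mem _
    (rf.add_mem hw (rf.const_mem n)))).1) (rf.const_mem _)

lemma E_truncate_comp_le {w : X → ℝ} (hw : w ∈ rf.F) {n : ℝ} (hn : 0 ≤ n) :
    rf.E (truncate n ∘ w) (truncate n ∘ w) ≤ rf.E w w := by
  rcases hn.eq_or_lt with rfl | hn
  · simpa [Function.comp_def, truncate_zero, rf.E_const_const] using rf.nonneg w hw
  have hv := rf.smul_mem (2 * n)⁻¹ (rf.add_mem hw (rf.const_mem n))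
  obtain ⟨hmem, hle⟩ := rf.markov _ hv
  rw [truncate_comp_eq_affine_unit w hn, rf.E_add_const (rf.smul_mem _ hmem),
    rf.E_smul_smul _ hmem]
  calc (2 * n) ^ 2 * rf.E _ _
      ≤ (2 * n) ^ 2 * rf.E ((2 * n)⁻¹ • (w + fun _ => n)) ((2 * n)⁻¹ • (w + fun _ => n)) := by
        gcongr
    _ = rf.E w w := by
      rw [rf.E_smul_smul _ (rf.add_mem hw (rf.const_mem n)), rf.E_add_const hw]
      field_simp

lemma E_truncate_comp_sub_nonneg {w : X → ℝ} (hw : w ∈ rf.F) {n : ℝ} (hn : 0 ≤ n) :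
    0 ≤ rf.E (truncate n ∘ w) (w - truncate n ∘ w) := by
  have hT := rf.truncate_comp_mem hw hn
  refine rf.E_nonneg_of_forall_le_E_add_smul hT (rf.sub_mem hw hT) fun t ht0 ht1 => ?_
  have hfix : truncate n ∘ (truncate n ∘ w + t • (w - truncate n ∘ w)) = truncate n ∘ w :=
    funext fun x => truncate_add_mul_sub_truncate (w x) hn ht0.le ht1
  calc rf.E (truncate n ∘ w) (truncate n ∘ w)
      = rf.E (truncate n ∘ (truncate n ∘ w + t • (w - truncate n ∘ w)))
          (truncate n ∘ (truncate n ∘ w + t • (w - truncate n ∘ w))) := by rw [hfix]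
    _ ≤ _ := rf.E_truncate_comp_le (rf.add_mem hT (rf.smul_mem t (rf.sub_mem hw hT))) hn

lemma E_truncate_comp_add_E_sub_le {w : X → ℝ} (hw : w ∈ rf.F) {n : ℝ} (hn : 0 ≤ n) :
    rf.E (truncate n ∘ w) (truncate n ∘ w) + rf.E (w - truncate n ∘ w) (w - truncate n ∘ w)
      ≤ rf.E w w := by
  have hT := rf.truncate_comp_mem hw hn
  have h := rf.E_add_add hT (rf.sub_mem hw hT)
  rw [add_sub_cancel] at h
  linarith [rf.E_truncate_comp_sub_nonneg hw hn]

lemma E_cauchy_of_E_add_E_sub_le {f : ℕ → X → ℝ} (hf : ∀ n, f n ∈ rf.F) {C : ℝ}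
    (hC : ∀ n, rf.E (f n) (f n) ≤ C)
    (hf_le : ∀ n m, n ≤ m →
      rf.E (f n) (f n) + rf.E (f m - f n) (f m - f n) ≤ rf.E (f m) (f m)) :
    ∀ ε : ℝ, 0 < ε → ∃ N : ℕ, ∀ m ≥ N, ∀ n ≥ N, rf.E (f m - f n) (f m - f n) < ε := by
  have hmono : Monotone fun n => rf.E (f n) (f n) := fun n m hnm => by
    linarith [hf_le n m hnm, rf.nonneg _ (rf.sub_mem (hf m) (hf n))]
  have hcauchy := (tendsto_atTop_ciSup hmono ⟨C, by rintro _ ⟨n, rfl⟩; exact hC n⟩).cauchySeq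
  intro ε hε
  obtain ⟨N, hN⟩ := Metric.cauchySeq_iff.1 hcauchy ε hε
  refine ⟨N, fun m hm n hn => ?_⟩
  wlog hnm : n ≤ m generalizing m n
  · rw [rf.E_sub_comm (hf m) (hf n)]
    exact this n hn m hm (le_of_not_ge hnm)
  have h := hN m hm n hn
  rw [Real.dist_eq] at h
  linarith [hf_le n m hnm, le_abs_self (rf.E (f m) (f m) - rf.E (f n) (f n))]

lemma eq_of_tendsto_E_sub {f : ℕ → X → ℝ} (hf : ∀ n, f n ∈ rf.F) {v : X → ℝ} (hv : v ∈ rf.F)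
    (hvf : Tendsto (fun n => rf.E (v - f n) (v - f n)) atTop (𝓝 0)) {u : X → ℝ}
    (hu : ∀ x, Tendsto (fun n => f n x) atTop (𝓝 (u x))) (x y : X) :
    v x - u x = v y - u y := by
  have hsq : Tendsto (fun n => ((v - f n) x - (v - f n) y) ^ 2) atTop
      (𝓝 (((v x - u x) - (v y - u y)) ^ 2)) :=
    ((tendsto_const_nhds.sub (hu x)).sub (tendsto_const_nhds.sub (hu y))).pow 2
  have hbound : Tendsto (fun n => rf.rmetric x y * rf.E (v - f n) (v - f n)) atTop (𝓝 0) := by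
    simpa using hvf.const_mul (rf.rmetric x y)
  have hle := le_of_tendsto_of_tendsto' hsq hbound fun n =>
    rf.sq_sub_le_rmetric_mul_E (rf.sub_mem hv (hf n)) x y
  exact sub_eq_zero.1 (pow_eq_zero_iff two_ne_zero |>.1 (le_antisymm hle (sq_nonneg _)))

lemma tendsto_E_sub_of_cauchy {f : ℕ → X → ℝ} (hf : ∀ n, f n ∈ rf.F)
    (hcauchy : ∀ ε : ℝ, 0 < ε → ∃ N : ℕ, ∀ m ≥ N, ∀ n ≥ N, rf.E (f m - f n) (f m - f n) < ε)
    {u : X → ℝ} (hu : ∀ x, Tendsto (fun n => f n x) atTop (𝓝 (u x))) :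
    Tendsto (fun n => rf.E (u - f n) (u - f n)) atTop (𝓝 0) := by
  obtain ⟨v, hv, hvf⟩ := rf.complete f hf hcauchy
  have hvf : Tendsto (fun n => rf.E (v - f n) (v - f n)) atTop (𝓝 0) :=
    Metric.tendsto_atTop.2 fun ε hε => (hvf ε hε).imp fun N hN n hn => by
      rw [Real.dist_eq, sub_zero, abs_of_nonneg (rf.nonneg _ (rf.sub_mem hv (hf n)))]
      exact hN n hn
  obtain ⟨c, hc⟩ : ∃ c : ℝ, ∀ x, u x - v x = c := by
    rcases isEmpty_or_nonempty X with hX | ⟨⟨x₀⟩⟩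
    · exact ⟨0, fun x => isEmptyElim x⟩
    · exact ⟨u x₀ - v x₀, fun x => by linarith [rf.eq_of_tendsto_E_sub hf hv hvf hu x x₀]⟩
  have hshift : ∀ n, u - f n = (v - f n) + fun _ => c := fun n => by
    funext x
    simp only [Pi.sub_apply, Pi.add_apply]
    linarith [hc x]
  simpa only [hshift, rf.E_add_const (rf.sub_mem hv (hf _))] using hvf

end ResistanceForm

theorem truncation_energy_tendsto_general {X : Type*} (rf : ResistanceForm X) (u : X → ℝ)
    (hu : u ∈ rf.F) :
    (∀ n : ℕ, (fun x => max (min (u x) (n : ℝ)) (-(n : ℝ))) ∈ rf.F) ∧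
    Tendsto (fun n : ℕ =>
        rf.E (u - fun x => max (min (u x) (n : ℝ)) (-(n : ℝ)))
          (u - fun x => max (min (u x) (n : ℝ)) (-(n : ℝ))))
      atTop (𝓝 0) := by
  have hmem : ∀ n : ℕ, truncate n ∘ u ∈ rf.F := fun n => rf.truncate_comp_mem hu n.cast_nonneg
  refine ⟨hmem, rf.tendsto_E_sub_of_cauchy hmem ?_ fun x => ?_⟩
  · refine rf.E_cauchy_of_E_add_E_sub_le hmem (fun n => rf.E_truncate_comp_le hu n.cast_nonneg)
      fun n m hnm => ?_
    have h := rf.E_truncate_comp_add_E_sub_le (hmem m) n.cast_nonneg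
    rwa [← Function.comp_assoc, truncate_comp_truncate_of_le (Nat.cast_le.2 hnm)] at h
  · obtain ⟨k, hk⟩ := exists_nat_ge |u x|
    exact tendsto_atTop_of_eventually_const fun n hn =>
      truncate_of_abs_le (hk.trans (Nat.cast_le.2 hn))

/-- Suppose the resistance metric `R` is complete and doubling.  For
`u ∈ F`, the truncations `û_n = max (min u n) (−n)` belong to `F` and
`E(u − û_n, u − û_n) → 0`. -/
theorem truncation_energy_tendsto {X : Type*} [MetricSpace X] [CompleteSpace X]
    (rf : ResistanceForm X) (hR : ∀ x y : X, dist x y = rf.rmetric x y)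
    (hdb : DoublingOf fun x y : X => dist x y)
    (u : X → ℝ) (hu : u ∈ rf.F) :
    (∀ n : ℕ, (fun x => max (min (u x) (n : ℝ)) (-(n : ℝ))) ∈ rf.F) ∧
    Tendsto (fun n : ℕ =>
        rf.E (u - fun x => max (min (u x) (n : ℝ)) (-(n : ℝ)))
          (u - fun x => max (min (u x) (n : ℝ)) (-(n : ℝ))))
      atTop (𝓝 0) :=
  truncation_energy_tendsto_general rf u hu
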